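/- Let h = 1/n for a positive integer n, and let u_h : [0,1] → ℝ be the piecewise affine function defined on each mesh interval [(j−1)h, jh] by u_h(t) = (2/h)·(t − (j−1)h) − 1 (so u_h goes linearly from −1 to 1 on each interval). Then the midpoint-rule approximation h·∑_{j=1}^{n} sin²(π·u_h(jh − h/2)) equals 0, while the exact integral ∫_0^1 sin²(π·u_h(t)) dt equals 1/2. -/

import Mathlib

open Real Set intervalIntegral

/-! On each mesh cell `u_h` runs affinely from `-1` to `1`, so it vanishes at the midpoint and
`sin² (π u_h)` runs over a full period of `sin²`, whose mean is `1/2`. -/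

noncomputable def ramp (a h t : ℝ) : ℝ := 2 / h * (t - a) - 1

lemma ramp_add_half {h : ℝ} (a : ℝ) (hh : h ≠ 0) : ramp a h (a + h / 2) = 0 := by
  unfold ramp
  field_simp
  ring

lemma continuous_sin_sq_pi_ramp (a h : ℝ) : Continuous fun t ↦ sin (π * ramp a h t) ^ 2 := by
  unfold ramp
  fun_prop

lemma integral_sin_sq_pi_ramp {h : ℝ} (a : ℝ) (hh : h ≠ 0) :
    ∫ t in a..a + h, sin (π * ramp a h t) ^ 2 = h / 2 := by
  have hc : 2 * π / h ≠ 0 := div_ne_zero (by positivity) hh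
  have affine : ∀ t, π * ramp a h t = 2 * π / h * t + -(π + 2 * π * a / h) := fun t ↦ by
    unfold ramp
    ring
  have left : 2 * π / h * a + -(π + 2 * π * a / h) = -π := by ring
  have right : 2 * π / h * (a + h) + -(π + 2 * π * a / h) = π := by field_simp; ring
  simp only [affine]
  rw [integral_comp_mul_add (fun x ↦ sin x ^ 2) hc, left, right, integral_sin_sq]
  simp only [sin_neg, sin_pi, neg_zero, zero_mul, smul_eq_mul]
  field_simp
  ring

section Cell

variable {u : ℝ → ℝ} {a h : ℝ}

lemma intervalIntegrable_sin_sq_pi_of_eqOn_ramp (hu : EqOn u (ramp a h) (uIoo a (a + h))) :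
    IntervalIntegrable (fun t ↦ sin (π * u t) ^ 2) MeasureTheory.volume a (a + h) :=
  ((continuous_sin_sq_pi_ramp a h).intervalIntegrable _ _).congr_uIoo
    fun t ht ↦ by simp only [hu ht]

lemma integral_sin_sq_pi_of_eqOn_ramp (hh : h ≠ 0) (hu : EqOn u (ramp a h) (uIoo a (a + h))) :
    ∫ t in a..a + h, sin (π * u t) ^ 2 = h / 2 := by
  rw [integral_congr_uIoo (g := fun t ↦ sin (π * ramp a h t) ^ 2)
    fun t ht ↦ by simp only [hu ht], integral_sin_sq_pi_ramp a hh]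

lemma integral_sin_sq_pi_of_eqOn_ramp_mesh {n : ℕ} (hh : 0 < h)
    (hu : ∀ k < n, EqOn u (ramp (k * h) h) (Ico (k * h) (k * h + h))) :
    ∫ t in (0:ℝ)..n * h, sin (π * u t) ^ 2 = n * (h / 2) := by
  have hu' : ∀ k < n, EqOn u (ramp (k * h) h) (uIoo (k * h) (k * h + h)) := fun k hk ↦
    (hu k hk).mono (by rw [uIoo_of_le (by linarith)]; exact Ioo_subset_Ico_self)
  have next : ∀ k : ℕ, ((k + 1 : ℕ) : ℝ) * h = k * h + h := fun k ↦ by push_cast; ring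
  calc ∫ t in (0:ℝ)..n * h, sin (π * u t) ^ 2
      = ∑ k ∈ Finset.range n,
          ∫ t in k * h..((k + 1 : ℕ) : ℝ) * h, sin (π * u t) ^ 2 := by
        rw [sum_integral_adjacent_intervals (a := fun k : ℕ ↦ k * h) fun k hk ↦
          next k ▸ intervalIntegrable_sin_sq_pi_of_eqOn_ramp (hu' k hk)]
        simp only [Nat.cast_zero, zero_mul]
    _ = ∑ k ∈ Finset.range n, h / 2 := Finset.sum_congr rfl fun k hk ↦ by
        rw [next, integral_sin_sq_pi_of_eqOn_ramp hh.ne' (hu' k (Finset.mem_range.mp hk))]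
    _ = n * (h / 2) := by rw [Finset.sum_const, Finset.card_range, nsmul_eq_mul]

end Cell

theorem midpoint_rule_counterexample (n : ℕ) (hn : 0 < n) (h : ℝ) (hh : h = 1/(n:ℝ))
    (u_h : ℝ → ℝ)
    (hu : ∀ j : ℕ, 1 ≤ j → j ≤ n →
      ∀ t ∈ Set.Ico (((j:ℝ) - 1) * h) ((j:ℝ) * h),
        u_h t = (2/h) * (t - ((j:ℝ) - 1) * h) - 1) :
    h * ∑ j ∈ Finset.Icc 1 n, (Real.sin (π * u_h ((j:ℝ) * h - h/2)))^2 = 0 ∧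
    ∫ t in (0:ℝ)..1, (Real.sin (π * u_h t))^2 = 1/2 := by
  have h_pos : 0 < h := by rw [hh]; positivity
  have cell : ∀ k < n, EqOn u_h (ramp (k * h) h) (Ico (k * h) (k * h + h)) := fun k hk t ht ↦ by
    rw [hu (k + 1) (by omega) hk t (by push_cast; simpa [add_one_mul] using ht), ramp]
    push_cast
    ring
  constructor
  · refine mul_eq_zero_of_right _ (Finset.sum_eq_zero fun j hj ↦ ?_)
    obtain ⟨k, rfl⟩ : ∃ k, j = k + 1 := Nat.exists_eq_add_of_le' (Finset.mem_Icc.mp hj).1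
    have hk : k < n := by have := (Finset.mem_Icc.mp hj).2; omega
    have hmid : ((k + 1 : ℕ) : ℝ) * h - h / 2 = k * h + h / 2 := by push_cast; ring
    rw [hmid, cell k hk ⟨by linarith, by linarith⟩, ramp_add_half _ h_pos.ne', mul_zero,
      sin_zero, sq, mul_zero]
  · have hend : (n : ℝ) * h = 1 := by rw [hh]; field_simp
    rw [← hend, integral_sin_sq_pi_of_eqOn_ramp_mesh h_pos cell, ← mul_div_assoc, hend]
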